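/- Let ρ > 1, Q > 0, and let integers M ≤ N be given with N ≥ 1. Let f : [-1,1] → ℝ be given by a uniformly convergent Chebyshev series f(x) = Σ_{n≥0} a_n T_n(x) with |a_0| ≤ Q and |a_n| ≤ 2Q ρ^{-n} for n ≥ 1. Let c ∈ ℝ^{M+1} solve the normal equations T_M(x^{equi})ᵀ T_M(x^{equi}) c = T_M(x^{equi})ᵀ f(x^{equi}), and set p_M(x) = Σ_{k=0}^M c_k T_k(x). Then sup_{x ∈ [-1,1]} |f(x) − p_M(x)| ≤ 2Q [ 1 + (M+1)(N+1)^{1/2} / σ_{M+1}(T_M(x^{equi})) ] · ρ^{-M}/(ρ−1). -/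

import Mathlib

open Matrix MeasureTheory
open scoped BigOperators

/-- Chebyshev polynomial of the first kind `T_n`, as a function `ℝ → ℝ`. -/
noncomputable def cheb (n : ℕ) (x : ℝ) : ℝ :=
  (Polynomial.Chebyshev.T ℝ (n : ℤ)).eval x

/-- The equally spaced grid `x_k = 2k/N - 1`, `k = 0, …, N`, on `[-1,1]`. -/
noncomputable def xequi (N : ℕ) (k : Fin (N + 1)) : ℝ :=
  2 * (k : ℝ) / (N : ℝ) - 1

/-- The `(N+1) × (M+1)` Chebyshev–Vandermonde matrix at the equally spaced grid. -/
noncomputable def chebVand (N M : ℕ) : Matrix (Fin (N + 1)) (Fin (M + 1)) ℝ :=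
  Matrix.of fun i j => cheb (j : ℕ) (xequi N i)

/-- The Euclidean norm of a vector in `ℝ^n`. -/
noncomputable def enorm2 {n : ℕ} (v : Fin n → ℝ) : ℝ :=
  Real.sqrt (∑ i, (v i) ^ 2)

/-- The smallest singular value of a matrix, as the infimum of `‖A v‖₂` over unit vectors. -/
noncomputable def sigmaMin {m n : ℕ} (A : Matrix (Fin m) (Fin n) ℝ) : ℝ :=
  sInf {r | ∃ v : Fin n → ℝ, enorm2 v = 1 ∧ r = enorm2 (A.mulVec v)}

/-- The largest singular value of a matrix, as the supremum of `‖A v‖₂` over unit vectors. -/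
noncomputable def sigmaMax {m n : ℕ} (A : Matrix (Fin m) (Fin n) ℝ) : ℝ :=
  sSup {r | ∃ v : Fin n → ℝ, enorm2 v = 1 ∧ r = enorm2 (A.mulVec v)}

/-!
Let `b = (a_0, …, a_M)`. Since `|T_n| ≤ 1` on `[-1,1]`, the coefficient decay bounds the tail
`f - Σ_{k ≤ M} a_k T_k` uniformly by `E = 2Qρ^{-M}/(ρ-1)`; in particular the residual
`r = f(x^equi) - A b` of `A = T_M(x^equi)` satisfies `‖r‖₂ ≤ √(N+1) E`. The normal equations give
`Aᵀ A (c - b) = Aᵀ r`, so `A (c - b)` is the orthogonal projection of `r` onto the range of `A`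
and `σ_{M+1}(A) ‖c - b‖₂ ≤ ‖A (c - b)‖₂ ≤ ‖r‖₂`. Finally
`|Σ (c_k - b_k) T_k(x)| ≤ Σ |c_k - b_k| ≤ (M+1) ‖c - b‖₂`, and `σ_{M+1}(A) > 0` because a
polynomial of degree at most `M` vanishing at the `N+1 > M` grid points is zero.
-/

open Polynomial Polynomial.Chebyshev

section Chebyshev

lemma abs_cheb_le_one (n : ℕ) {x : ℝ} (hx : x ∈ Set.Icc (-1 : ℝ) 1) : |cheb n x| ≤ 1 := by
  rw [cheb, ← Real.cos_arccos hx.1 hx.2, T_real_cos]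
  exact Real.abs_cos_le_one _

lemma eq_zero_of_forall_sum_mul_cheb_eq_zero {m M : ℕ} {x : Fin m → ℝ}
    (hx : Function.Injective x) (hM : M < m) {v : Fin (M + 1) → ℝ}
    (hv : ∀ i, ∑ j, v j * cheb j (x i) = 0) : v = 0 := by
  set p : ℝ[X] := ∑ j, v j • T ℝ ((j : ℕ) : ℤ)
  have hdeg : p.natDegree < Fintype.card (Fin m) := by
    refine lt_of_le_of_lt (natDegree_sum_le_of_forall_le _ _ fun j _ => ?_) (by simpa using hM)
    exact (natDegree_smul_le _ _).trans (by simpa using Nat.lt_succ_iff.mp j.isLt)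
  have hp : p = 0 := eq_zero_of_natDegree_lt_card_of_eval_eq_zero p hx
    (fun i => by simpa [p, eval_finsetSum, cheb] using hv i) hdeg
  have hind : LinearIndependent ℝ fun j : Fin (M + 1) => T ℝ ((j : ℕ) : ℤ) :=
    (chebyshevTsequence ℝ).linearIndependent.comp _ Fin.val_injective
  funext j
  exact Fintype.linearIndependent_iff.mp hind v hp j

end Chebyshev

section Grid

lemma xequi_injective {N : ℕ} (hN : N ≠ 0) : Function.Injective (xequi N) := by
  intro k l hkl
  have hN0 : (N : ℝ) ≠ 0 := Nat.cast_ne_zero.mpr hN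
  have hkl' : (k : ℝ) = l := by
    simp only [xequi] at hkl
    field_simp at hkl
    linarith
  exact Fin.ext (by exact_mod_cast hkl')

lemma xequi_mem_Icc (N : ℕ) (k : Fin (N + 1)) : xequi N k ∈ Set.Icc (-1 : ℝ) 1 := by
  have hk : (k : ℝ) ≤ N := by exact_mod_cast Fin.is_le k
  have h2 : 2 * (k : ℝ) / N ≤ 2 :=
    div_le_of_le_mul₀ (Nat.cast_nonneg N) zero_le_two (by linarith)
  have h0 : 0 ≤ 2 * (k : ℝ) / N := by positivity
  constructor <;> simp only [xequi] <;> linarith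

lemma chebVand_mulVec_apply (N M : ℕ) (v : Fin (M + 1) → ℝ) (i : Fin (N + 1)) :
    (chebVand N M *ᵥ v) i = ∑ j, v j * cheb j (xequi N i) := by
  simp [chebVand, mulVec, dotProduct, mul_comm]

lemma eq_zero_of_chebVand_mulVec_eq_zero {N M : ℕ} (hMN : M ≤ N) (hN : N ≠ 0)
    {v : Fin (M + 1) → ℝ} (hv : chebVand N M *ᵥ v = 0) : v = 0 :=
  eq_zero_of_forall_sum_mul_cheb_eq_zero (xequi_injective hN) (by omega) fun i => by
    rw [← chebVand_mulVec_apply, hv, Pi.zero_apply]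

end Grid

section EuclideanNorm

variable {n : ℕ}

lemma enorm2_eq_norm (v : Fin n → ℝ) : enorm2 v = ‖WithLp.toLp 2 v‖ := by
  simp [enorm2, EuclideanSpace.norm_eq]

lemma enorm2_nonneg (v : Fin n → ℝ) : 0 ≤ enorm2 v := Real.sqrt_nonneg _

lemma enorm2_zero : enorm2 (0 : Fin n → ℝ) = 0 := by simp [enorm2]

lemma eq_zero_of_enorm2_eq_zero {v : Fin n → ℝ} (h : enorm2 v = 0) : v = 0 := by
  rwa [enorm2_eq_norm, norm_eq_zero, WithLp.toLp_eq_zero] at h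

lemma enorm2_smul (t : ℝ) (v : Fin n → ℝ) : enorm2 (t • v) = |t| * enorm2 v := by
  rw [enorm2_eq_norm, enorm2_eq_norm, WithLp.toLp_smul, norm_smul, Real.norm_eq_abs]

lemma sq_enorm2 (v : Fin n → ℝ) : enorm2 v ^ 2 = v ⬝ᵥ v := by
  rw [enorm2, Real.sq_sqrt (Finset.sum_nonneg fun i _ => sq_nonneg _)]
  simp [dotProduct, sq]

lemma dotProduct_le_enorm2_mul (u v : Fin n → ℝ) : u ⬝ᵥ v ≤ enorm2 u * enorm2 v :=
  Real.sum_mul_le_sqrt_mul_sqrt Finset.univ u v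

lemma abs_le_enorm2 (v : Fin n → ℝ) (i : Fin n) : |v i| ≤ enorm2 v :=
  Real.abs_le_sqrt (Finset.single_le_sum (fun j _ => sq_nonneg (v j)) (Finset.mem_univ i))

lemma enorm2_le_sqrt_mul {v : Fin n → ℝ} {E : ℝ} (hE : 0 ≤ E) (hv : ∀ i, |v i| ≤ E) :
    enorm2 v ≤ Real.sqrt n * E := by
  have hsum : ∑ i, v i ^ 2 ≤ n * E ^ 2 := by
    simpa using Finset.sum_le_card_nsmul Finset.univ (fun i => v i ^ 2) (E ^ 2)
      fun i _ => by simpa only [sq_abs] using pow_le_pow_left₀ (abs_nonneg _) (hv i) 2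
  rw [enorm2, ← Real.sqrt_sq hE, ← Real.sqrt_mul (Nat.cast_nonneg n)]
  exact Real.sqrt_le_sqrt hsum

lemma abs_sum_mul_le_card_mul_enorm2 (v w : Fin n → ℝ) (hw : ∀ i, |w i| ≤ 1) :
    |∑ i, v i * w i| ≤ n * enorm2 v :=
  calc |∑ i, v i * w i| ≤ ∑ i, |v i * w i| := Finset.abs_sum_le_sum_abs _ _
    _ ≤ ∑ _i : Fin n, enorm2 v := Finset.sum_le_sum fun i _ => by
        rw [abs_mul]
        exact (mul_le_of_le_one_right (abs_nonneg _) (hw i)).trans (abs_le_enorm2 v i)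
    _ = n * enorm2 v := by simp

end EuclideanNorm

section LeastSquares

variable {m n : ℕ}

lemma sigmaMin_mul_enorm2_le (A : Matrix (Fin m) (Fin n) ℝ) (v : Fin n → ℝ) :
    sigmaMin A * enorm2 v ≤ enorm2 (A *ᵥ v) := by
  rcases eq_or_ne v 0 with rfl | hv
  · simp [enorm2_zero]
  have hpos : 0 < enorm2 v :=
    (enorm2_nonneg v).lt_of_ne' fun h => hv (eq_zero_of_enorm2_eq_zero h)
  have hunit : enorm2 ((enorm2 v)⁻¹ • v) = 1 := by
    rw [enorm2_smul, abs_of_pos (inv_pos.mpr hpos), inv_mul_cancel₀ hpos.ne']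
  have hle : sigmaMin A ≤ (enorm2 v)⁻¹ * enorm2 (A *ᵥ v) := by
    refine csInf_le ⟨0, ?_⟩ ⟨_, hunit, ?_⟩
    · rintro r ⟨u, -, rfl⟩
      exact enorm2_nonneg _
    · rw [mulVec_smul, enorm2_smul, abs_of_pos (inv_pos.mpr hpos)]
  rwa [← le_div_iff₀ hpos, div_eq_inv_mul]

lemma sigmaMin_pos [NeZero n] {A : Matrix (Fin m) (Fin n) ℝ}
    (hA : ∀ v, A *ᵥ v = 0 → v = 0) : 0 < sigmaMin A := by
  set S := {r | ∃ v : Fin n → ℝ, enorm2 v = 1 ∧ r = enorm2 (A *ᵥ v)}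
  have hS : S = (fun u : EuclideanSpace ℝ (Fin n) => enorm2 (A *ᵥ u.ofLp)) ''
      Metric.sphere 0 1 := by
    ext r
    constructor
    · rintro ⟨v, hv, rfl⟩
      exact ⟨WithLp.toLp 2 v, by simpa [← enorm2_eq_norm] using hv, rfl⟩
    · rintro ⟨u, hu, rfl⟩
      exact ⟨u.ofLp, by simpa [enorm2_eq_norm] using hu, rfl⟩
  have hcont : Continuous fun u : EuclideanSpace ℝ (Fin n) => enorm2 (A *ᵥ u.ofLp) := by
    simp only [enorm2]
    fun_prop
  obtain ⟨v, hv, hmin⟩ : sInf S ∈ S := by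
    rw [hS]
    exact ((isCompact_sphere 0 1).image hcont).sInf_mem
      ((NormedSpace.sphere_nonempty.mpr zero_le_one).image _)
  change 0 < sInf S
  rw [hmin]
  refine (enorm2_nonneg _).lt_of_ne' fun h => ?_
  rw [hA v (eq_zero_of_enorm2_eq_zero h), enorm2_zero] at hv
  exact zero_ne_one hv

lemma enorm2_mulVec_le_of_transpose_mulVec_eq (A : Matrix (Fin m) (Fin n) ℝ)
    {d : Fin n → ℝ} {r : Fin m → ℝ} (h : Aᵀ *ᵥ (A *ᵥ d) = Aᵀ *ᵥ r) :
    enorm2 (A *ᵥ d) ≤ enorm2 r := by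
  have key : enorm2 (A *ᵥ d) ^ 2 ≤ enorm2 r * enorm2 (A *ᵥ d) :=
    calc enorm2 (A *ᵥ d) ^ 2 = d ⬝ᵥ (Aᵀ *ᵥ (A *ᵥ d)) := by
          rw [sq_enorm2, dotProduct_mulVec d, vecMul_transpose]
      _ = r ⬝ᵥ (A *ᵥ d) := by
          rw [h, dotProduct_mulVec d, vecMul_transpose, dotProduct_comm]
      _ ≤ enorm2 r * enorm2 (A *ᵥ d) := dotProduct_le_enorm2_mul _ _
  nlinarith [enorm2_nonneg (A *ᵥ d), enorm2_nonneg r]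

lemma sigmaMin_mul_enorm2_sub_le (A : Matrix (Fin m) (Fin n) ℝ) {c : Fin n → ℝ}
    {y : Fin m → ℝ} (hc : (Aᵀ * A) *ᵥ c = Aᵀ *ᵥ y) (b : Fin n → ℝ) :
    sigmaMin A * enorm2 (c - b) ≤ enorm2 (y - A *ᵥ b) :=
  (sigmaMin_mul_enorm2_le A _).trans <| enorm2_mulVec_le_of_transpose_mulVec_eq A <| by
    rw [mulVec_sub, mulVec_sub, mulVec_sub, mulVec_mulVec, hc, mulVec_mulVec]

end LeastSquares

section Tail

lemma abs_sub_sum_range_le_of_le_geometric {g : ℕ → ℝ} {S C r : ℝ} (hS : HasSum g S)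
    (hr : r < 1) (m : ℕ) (hg : ∀ n, m ≤ n → |g n| ≤ C * r ^ n) :
    |S - ∑ k ∈ Finset.range m, g k| ≤ C * r ^ m / (1 - r) := by
  have hstep : ∀ n, dist (∑ k ∈ Finset.range (n + m), g k) (∑ k ∈ Finset.range (n + 1 + m), g k)
      ≤ C * r ^ m * r ^ n := fun n => by
    rw [dist_comm, Real.dist_eq, add_right_comm, Finset.sum_range_succ, add_sub_cancel_left,
      mul_assoc, ← pow_add, add_comm m]
    exact hg _ (Nat.le_add_left m n)
  have hlim := dist_le_of_le_geometric_of_tendsto₀ r _ hr hstep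
    (hS.tendsto_sum_nat.comp (Filter.tendsto_add_atTop_nat m))
  rwa [zero_add, Real.dist_eq, abs_sub_comm] at hlim

lemma abs_sub_sum_mul_cheb_le {ρ Q x S : ℝ} {a : ℕ → ℝ} (hρ : 1 < ρ)
    (hx : x ∈ Set.Icc (-1 : ℝ) 1) (hS : HasSum (fun n => a n * cheb n x) S)
    (ha : ∀ n : ℕ, 1 ≤ n → |a n| ≤ 2 * Q * ρ ^ (-(n : ℤ))) (M : ℕ) :
    |S - ∑ k : Fin (M + 1), a k * cheb k x| ≤ 2 * Q * ρ ^ (-(M : ℤ)) / (ρ - 1) := by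
  have hg : ∀ n, M + 1 ≤ n → |a n * cheb n x| ≤ 2 * Q * ρ⁻¹ ^ n := fun n hn => by
    rw [abs_mul, inv_pow, ← zpow_natCast, ← _root_.zpow_neg]
    exact (mul_le_of_le_one_right (abs_nonneg _) (abs_cheb_le_one n hx)).trans (ha n (by omega))
  have htail := abs_sub_sum_range_le_of_le_geometric hS (inv_lt_one_of_one_lt₀ hρ) (M + 1) hg
  rw [Fin.sum_univ_eq_sum_range (fun k => a k * cheb k x)]
  convert htail using 1
  have hρ1 : ρ - 1 ≠ 0 := sub_ne_zero.mpr hρ.ne'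
  rw [_root_.zpow_neg, zpow_natCast, inv_pow, pow_succ]
  field_simp

end Tail

theorem least_squares_uniform_error_general (ρ Q : ℝ) (hρ : 1 < ρ)
    (M N : ℕ) (hMN : M ≤ N) (hN : 1 ≤ N)
    (f : ℝ → ℝ) (a : ℕ → ℝ)
    (hf : ∀ x ∈ Set.Icc (-1 : ℝ) 1, HasSum (fun n : ℕ => a n * cheb n x) (f x))
    (ha : ∀ n : ℕ, 1 ≤ n → |a n| ≤ 2 * Q * ρ ^ (-(n : ℤ)))
    (c : Fin (M + 1) → ℝ)
    (hc : ((chebVand N M).transpose * chebVand N M) *ᵥ c =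
      (chebVand N M).transpose *ᵥ (fun i => f (xequi N i))) :
    ∀ x ∈ Set.Icc (-1 : ℝ) 1,
      |f x - ∑ k : Fin (M + 1), c k * cheb (k : ℕ) x| ≤
        2 * Q * (1 + ((M : ℝ) + 1) * Real.sqrt ((N : ℝ) + 1) / sigmaMin (chebVand N M)) *
          (ρ ^ (-(M : ℤ)) / (ρ - 1)) := by
  intro x hx
  set E := 2 * Q * ρ ^ (-(M : ℤ)) / (ρ - 1)
  set σ := sigmaMin (chebVand N M)
  set b : Fin (M + 1) → ℝ := fun k => a k
  have htail : ∀ y ∈ Set.Icc (-1 : ℝ) 1, |f y - ∑ k, b k * cheb k y| ≤ E :=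
    fun y hy => abs_sub_sum_mul_cheb_le hρ hy (hf y hy) ha M
  have hE : 0 ≤ E := (abs_nonneg _).trans (htail x hx)
  have hσ : 0 < σ := sigmaMin_pos fun v => eq_zero_of_chebVand_mulVec_eq_zero hMN (by omega)
  have hresidual : enorm2 ((fun i => f (xequi N i)) - chebVand N M *ᵥ b) ≤
      Real.sqrt ((N : ℝ) + 1) * E := by
    refine (enorm2_le_sqrt_mul hE fun i => ?_).trans_eq (by push_cast; rfl)
    rw [Pi.sub_apply, chebVand_mulVec_apply]
    exact htail _ (xequi_mem_Icc N i)
  have hcoeff : enorm2 (c - b) ≤ Real.sqrt ((N : ℝ) + 1) * E / σ := by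
    rw [le_div_iff₀' hσ]
    exact (sigmaMin_mul_enorm2_sub_le _ hc b).trans hresidual
  have hdiff :
      |∑ k, (c - b) k * cheb k x| ≤ ((M : ℝ) + 1) * (Real.sqrt ((N : ℝ) + 1) * E / σ) := by
    refine (abs_sum_mul_le_card_mul_enorm2 _ _ fun k => abs_cheb_le_one k hx).trans ?_
    push_cast
    gcongr
  calc |f x - ∑ k, c k * cheb k x|
      = |(f x - ∑ k, b k * cheb k x) - ∑ k, (c - b) k * cheb k x| := by
        simp only [Pi.sub_apply, sub_mul, Finset.sum_sub_distrib]
        congr 1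
        ring
    _ ≤ E + ((M : ℝ) + 1) * (Real.sqrt ((N : ℝ) + 1) * E / σ) :=
        (abs_sub _ _).trans (add_le_add (htail x hx) hdiff)
    _ = _ := by
        simp only [E]
        field_simp

/-- **Theorem 4.1 of the paper, uniform error bound**: if `f(x) = Σ a_n T_n(x)` on
`[-1,1]` with `|a_0| ≤ Q`, `|a_n| ≤ 2Qρ^{-n}`, and `p_M = Σ c_k T_k` where `c` solves
the unperturbed normal equations at `N+1` equally spaced points, then
`sup_{x∈[-1,1]} |f(x) − p_M(x)| ≤ 2Q [1 + (M+1)√(N+1)/σ_{M+1}(T_M(x^equi))] ρ^{-M}/(ρ−1)`. -/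
theorem least_squares_uniform_error (ρ Q : ℝ) (hρ : 1 < ρ) (hQ : 0 < Q)
    (M N : ℕ) (hMN : M ≤ N) (hN : 1 ≤ N)
    (f : ℝ → ℝ) (a : ℕ → ℝ)
    (hf : ∀ x ∈ Set.Icc (-1 : ℝ) 1, HasSum (fun n : ℕ => a n * cheb n x) (f x))
    (ha0 : |a 0| ≤ Q)
    (ha : ∀ n : ℕ, 1 ≤ n → |a n| ≤ 2 * Q * ρ ^ (-(n : ℤ)))
    (c : Fin (M + 1) → ℝ)
    (hc : ((chebVand N M).transpose * chebVand N M) *ᵥ c =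
      (chebVand N M).transpose *ᵥ (fun i => f (xequi N i))) :
    ∀ x ∈ Set.Icc (-1 : ℝ) 1,
      |f x - ∑ k : Fin (M + 1), c k * cheb (k : ℕ) x| ≤
        2 * Q * (1 + ((M : ℝ) + 1) * Real.sqrt ((N : ℝ) + 1) / sigmaMin (chebVand N M)) *
          (ρ ^ (-(M : ℤ)) / (ρ - 1)) :=
  least_squares_uniform_error_general ρ Q hρ M N hMN hN f a hf ha c hc
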